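/- Let Σ be a positive definite d×d matrix with eigendecomposition Σ = ∑_i σ_i v_i v_iᵀ where σ₁ ≥ ⋯ ≥ σ_d > 0, let λ⋆ ∈ (σ_{k⋆+1}, σ_{k⋆}] for some 1 ≤ k⋆ < d, let β ∈ ℝ^d, and suppose Tr(Σ²(Σ+λ⋆I)⁻²) ≤ n(1 − 1/c⋆) with c⋆ > 1. Then λ⋆² ⟨β, (Σ+λ⋆I)⁻² Σ β⟩ / (1 − n⁻¹Tr(Σ²(Σ+λ⋆I)⁻²)) ≤ c⋆ (σ_{k⋆}² ‖β_{≤k⋆}‖²_{Σ⁻¹} + ‖β_{>k⋆}‖²_Σ), where β_{≤k} is the projection of β onto span(v₁,…,v_k), β_{>k} = β − β_{≤k}, ‖x‖²_{Σ⁻¹} = xᵀΣ⁻¹x and ‖x‖²_Σ = xᵀΣx. -/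

import Mathlib

/-!
In the eigenbasis of `Σ` every matrix in sight is diagonal, so both sides are sums over the
eigen-directions of `⟨β, vᵢ⟩²` times a scalar weight. The trace hypothesis bounds the denominator
below by `1/c⋆`. Termwise, `λ⋆² σᵢ / (σᵢ + λ⋆)²` is at most `λ⋆² / σᵢ ≤ σ_{k⋆}² / σᵢ` (as
`λ⋆ ≤ σ_{k⋆}`) and at most `σᵢ` (as `λ⋆ ≤ σᵢ + λ⋆`); the first bound is used for the directions
`i ≤ k⋆` and the second for the others.
-/

open Matrix Finset

section SpectralSum

variable {ι R : Type*} [Fintype ι] [CommRing R]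

def spectralSum (v : ι → ι → R) (f : ι → R) : Matrix ι ι R :=
  ∑ i, f i • vecMulVec (v i) (v i)

theorem spectralSum_mulVec (v : ι → ι → R) (f x : ι → R) :
    spectralSum v f *ᵥ x = ∑ i, (f i * (v i ⬝ᵥ x)) • v i := by
  simp only [spectralSum, sum_mulVec, smul_mulVec, vecMulVec_mulVec, op_smul_eq_smul, smul_smul]

theorem dotProduct_spectralSum_mulVec (v : ι → ι → R) (f x : ι → R) :
    x ⬝ᵥ (spectralSum v f *ᵥ x) = ∑ i, f i * (v i ⬝ᵥ x) ^ 2 := by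
  simp only [spectralSum_mulVec, dotProduct_sum, dotProduct_smul, smul_eq_mul,
    dotProduct_comm x (v _)]
  exact Finset.sum_congr rfl fun i _ => by ring

variable [DecidableEq ι]

theorem dotProduct_sum_smul_of_orthonormal {v : ι → ι → R}
    (hv : ∀ i j, v i ⬝ᵥ v j = if i = j then 1 else 0) (s : Finset ι) (c : ι → R) (j : ι) :
    v j ⬝ᵥ ∑ i ∈ s, c i • v i = if j ∈ s then c j else 0 := by
  simp only [dotProduct_sum, dotProduct_smul, hv, smul_eq_mul, mul_ite, mul_one, mul_zero,
    Finset.sum_ite_eq]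

theorem spectralSum_mul {v : ι → ι → R} (hv : ∀ i j, v i ⬝ᵥ v j = if i = j then 1 else 0)
    (f g : ι → R) : spectralSum v f * spectralSum v g = spectralSum v (f * g) := by
  simp only [spectralSum, Finset.sum_mul, Finset.mul_sum, smul_mul_smul, vecMulVec_mul_vecMulVec,
    hv, ite_smul, zero_smul, one_smul, apply_ite (vecMulVec _), vecMulVec_zero, smul_ite,
    smul_zero, Finset.sum_ite_eq', Finset.mem_univ, if_true]
  exact Finset.sum_congr rfl fun i _ => by rw [Pi.mul_apply, mul_comm]

theorem spectralSum_one {v : ι → ι → R} (hv : ∀ i j, v i ⬝ᵥ v j = if i = j then 1 else 0) :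
    spectralSum v 1 = 1 := by
  have hV : of v * (of v)ᵀ = 1 := by
    ext i j
    simpa [mul_apply, one_apply, dotProduct] using hv i j
  rw [← mul_eq_one_comm.mp hV]
  ext a b
  simp [spectralSum, mul_apply, vecMulVec_apply, Matrix.sum_apply]

theorem spectralSum_add_smul_one {v : ι → ι → R}
    (hv : ∀ i j, v i ⬝ᵥ v j = if i = j then 1 else 0) (f : ι → R) (a : R) :
    spectralSum v f + a • 1 = spectralSum v fun i => f i + a := by
  rw [← spectralSum_one hv, spectralSum, spectralSum, spectralSum, Finset.smul_sum,
    ← Finset.sum_add_distrib]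
  simp only [Pi.one_apply, add_smul, smul_smul, mul_one]

theorem inv_spectralSum {v : ι → ι → R} (hv : ∀ i j, v i ⬝ᵥ v j = if i = j then 1 else 0)
    {f g : ι → R} (hfg : f * g = 1) : (spectralSum v f)⁻¹ = spectralSum v g :=
  inv_eq_right_inv (by rw [spectralSum_mul hv, hfg, spectralSum_one hv])

end SpectralSum

theorem sq_mul_div_add_sq_le_sq_div {s lam t : ℝ} (hs : 0 < s) (hlam : 0 ≤ lam)
    (hlt : lam ≤ t) : lam ^ 2 * s / (s + lam) ^ 2 ≤ t ^ 2 / s :=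
  calc lam ^ 2 * s / (s + lam) ^ 2 ≤ lam ^ 2 * s / s ^ 2 := by gcongr; linarith
    _ = lam ^ 2 / s := by field_simp
    _ ≤ t ^ 2 / s := by gcongr

theorem sq_mul_div_add_sq_le_self {s lam : ℝ} (hs : 0 < s) (hlam : 0 ≤ lam) :
    lam ^ 2 * s / (s + lam) ^ 2 ≤ s := by
  rw [div_le_iff₀ (by positivity)]
  nlinarith [mul_nonneg hs.le hlam, mul_nonneg (mul_nonneg hs.le hs.le) hlam]

theorem sq_mul_sum_inv_add_sq_le {ι : Type*} [Fintype ι] (p : ι → Prop) [DecidablePred p]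
    {σ : ι → ℝ} (hσ : ∀ i, 0 < σ i) (b : ι → ℝ) {lam t : ℝ} (hlam : 0 ≤ lam)
    (hlt : lam ≤ t) :
    lam ^ 2 * ∑ i, (σ i + lam)⁻¹ ^ 2 * σ i * b i ^ 2 ≤
      t ^ 2 * ∑ i, (σ i)⁻¹ * (if p i then b i else 0) ^ 2 +
        ∑ i, σ i * (if p i then 0 else b i) ^ 2 := by
  simp only [Finset.mul_sum, ← Finset.sum_add_distrib]
  refine Finset.sum_le_sum fun i _ => ?_
  have hweight : lam ^ 2 * ((σ i + lam)⁻¹ ^ 2 * σ i * b i ^ 2) =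
      lam ^ 2 * σ i / (σ i + lam) ^ 2 * b i ^ 2 := by
    field_simp
  rw [hweight]
  by_cases hi : p i
  · calc lam ^ 2 * σ i / (σ i + lam) ^ 2 * b i ^ 2 ≤ t ^ 2 / σ i * b i ^ 2 :=
          mul_le_mul_of_nonneg_right (sq_mul_div_add_sq_le_sq_div (hσ i) hlam hlt) (sq_nonneg _)
      _ = _ := by simp only [hi, if_true]; ring
  · calc lam ^ 2 * σ i / (σ i + lam) ^ 2 * b i ^ 2 ≤ σ i * b i ^ 2 :=
          mul_le_mul_of_nonneg_right (sq_mul_div_add_sq_le_self (hσ i) hlam) (sq_nonneg _)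
      _ = _ := by simp only [hi, if_false]; ring

theorem div_one_sub_inv_mul_le_mul {x T c n : ℝ} (hx : 0 ≤ x) (hc : 1 < c) (hn : 0 ≤ n)
    (hT : T ≤ n * (1 - 1 / c)) : x / (1 - 1 / n * T) ≤ c * x := by
  have hc0 : 0 < c := one_pos.trans hc
  have hden : 1 / c ≤ 1 - 1 / n * T := by
    rcases hn.eq_or_lt with rfl | hn
    · simpa using (div_le_one hc0).mpr hc.le
    · rw [one_div_mul_eq_div, le_sub_comm, div_le_iff₀' hn]
      exact hT
  calc x / (1 - 1 / n * T) ≤ x / (1 / c) := div_le_div_of_nonneg_left hx (by positivity) hden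
    _ = c * x := by field_simp

theorem stmt3 {d : ℕ} (σ : Fin d → ℝ) (v : Fin d → Fin d → ℝ)
    (hpos : ∀ i, 0 < σ i)
    (horth : ∀ i j : Fin d, v i ⬝ᵥ v j = if i = j then (1 : ℝ) else 0)
    (Sig : Matrix (Fin d) (Fin d) ℝ)
    (hSig : Sig = ∑ i, σ i • Matrix.vecMulVec (v i) (v i))
    (kstar : Fin d) (hklt : (kstar : ℕ) + 1 < d)
    (lam : ℝ) (hlam1 : lam ≤ σ kstar) (hlam2 : σ ⟨(kstar : ℕ) + 1, hklt⟩ < lam)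
    (n : ℕ) (c : ℝ) (hc : 1 < c)
    (htr : (Sig ^ 2 * ((Sig + lam • 1)⁻¹) ^ 2).trace ≤ (n : ℝ) * (1 - 1 / c))
    (β βle βgt : Fin d → ℝ)
    (hβle : βle = ∑ i ∈ Finset.univ.filter (fun i => i ≤ kstar), (β ⬝ᵥ v i) • v i)
    (hβgt : βgt = β - βle) :
    lam ^ 2 * (β ⬝ᵥ ((((Sig + lam • 1)⁻¹) ^ 2 * Sig) *ᵥ β)) /
        (1 - (1 / (n : ℝ)) * (Sig ^ 2 * ((Sig + lam • 1)⁻¹) ^ 2).trace) ≤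
      c * ((σ kstar) ^ 2 * (βle ⬝ᵥ (Sig⁻¹ *ᵥ βle)) + βgt ⬝ᵥ (Sig *ᵥ βgt)) := by
  have hlam : 0 < lam := (hpos _).trans hlam2
  have hSig' : Sig = spectralSum v σ := hSig
  have hres : (Sig + lam • 1)⁻¹ = spectralSum v fun i => (σ i + lam)⁻¹ := by
    rw [hSig', spectralSum_add_smul_one horth]
    exact inv_spectralSum horth (funext fun i => mul_inv_cancel₀ (add_pos (hpos i) hlam).ne')
  have hinv : Sig⁻¹ = spectralSum v σ⁻¹ :=
    hSig' ▸ inv_spectralSum horth (funext fun i => mul_inv_cancel₀ (hpos i).ne')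
  have hle : ∀ i, v i ⬝ᵥ βle = if i ≤ kstar then v i ⬝ᵥ β else 0 := fun i => by
    simp [hβle, dotProduct_sum_smul_of_orthonormal horth, dotProduct_comm β]
  have hgt : ∀ i, v i ⬝ᵥ βgt = if i ≤ kstar then 0 else v i ⬝ᵥ β := fun i => by
    rw [hβgt, dotProduct_sub, hle]
    split_ifs <;> simp
  have hbias : ((Sig + lam • 1)⁻¹) ^ 2 * Sig = spectralSum v fun i => (σ i + lam)⁻¹ ^ 2 * σ i := by
    rw [hres, hSig', sq, spectralSum_mul horth, spectralSum_mul horth]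
    simp only [Pi.mul_def, sq]
  have hquad : 0 ≤ β ⬝ᵥ ((((Sig + lam • 1)⁻¹) ^ 2 * Sig) *ᵥ β) := by
    rw [hbias, dotProduct_spectralSum_mulVec]
    exact Finset.sum_nonneg fun i _ => by have := hpos i; positivity
  refine (div_one_sub_inv_mul_le_mul (by positivity) hc n.cast_nonneg htr).trans
    (mul_le_mul_of_nonneg_left ?_ (by linarith))
  rw [hbias, hinv, hSig']
  simp only [dotProduct_spectralSum_mulVec, hle, hgt, Pi.inv_apply]
  exact sq_mul_sum_inv_add_sq_le (· ≤ kstar) hpos _ hlam.le hlam1
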